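/- arXiv:2102.01959 — 10 statements merged into one kernel-verified Lean document; each statement's English description precedes it below -/
import Mathlib

section
/- Let $A,B,C,D$ be nonempty sets and $I \subseteq \mathcal{F}_{CD}$, $J \subseteq \mathcal{F}_{BC}$, $K \subseteq \mathcal{F}_{AB}$ be classes of functions of several arguments. Then $(IJ)K \subseteq I(JK)$. Moreover, if $J$ is minor-closed (stable under right composition with the clone of projections on $B$), then $(IJ)K = I(JK)$. -/
/-- A class of functions of several arguments from A to B:
for each arity n, a set of functions (Fin n → A) → B. -/
abbrev MClass (A B : Type*) := ∀ n : ℕ, Set ((Fin n → A) → B)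

/-- Composition of function classes. -/
def MComp {A B C : Type*} (I : MClass B C) (J : MClass A B) : MClass A C :=
  fun m => { h | ∃ (n : ℕ) (f : (Fin n → B) → C) (g : Fin n → ((Fin m → A) → B)),
    f ∈ I n ∧ (∀ i, g i ∈ J m) ∧ h = fun a => f (fun i => g i a) }

/-- Containment of function classes. -/
def SubClass {A B : Type*} (F G : MClass A B) : Prop := ∀ n, F n ⊆ G n

/-- A clone: contains all projections and is closed under composition. -/
def IsClone {A : Type*} (C : MClass A A) : Prop :=
  (∀ (n : ℕ) (i : Fin n), (fun a : Fin n → A => a i) ∈ C n) ∧ SubClass (MComp C C) C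

/-- The clone of projections on A. -/
def ProjClone (A : Type*) : MClass A A :=
  fun n => { f | ∃ i : Fin n, f = fun a => a i }

theorem associativity_lemma {A B C D : Type*}
    [Nonempty A] [Nonempty B] [Nonempty C] [Nonempty D]
    (I : MClass C D) (J : MClass B C) (K : MClass A B) :
    SubClass (MComp (MComp I J) K) (MComp I (MComp J K)) ∧
    (SubClass (MComp J (ProjClone B)) J →
      ∀ n, MComp (MComp I J) K n = MComp I (MComp J K) n) := by
  have sub : SubClass (MComp (MComp I J) K) (MComp I (MComp J K)) := by
    rintro m h ⟨n, f, g, ⟨p, F, G, hF, hG, rfl⟩, hg, rfl⟩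
    refine ⟨p, F, fun i => fun a => G i (fun j => g j a), hF, fun i => ?_, rfl⟩
    exact ⟨n, G i, g, hG i, hg, rfl⟩
  refine ⟨sub, fun hJ m => Set.Subset.antisymm (sub m) ?_⟩
  rintro h ⟨n, F, g, hF, hg, rfl⟩
  choose p G k hG hk hgeq using hg
  classical
  set N := Fintype.card (Σ i : Fin n, Fin (p i)) with hN
  let e : (Σ i : Fin n, Fin (p i)) ≃ Fin N := Fintype.equivFin _
  refine ⟨N, fun b => F (fun i => G i (fun j => b (e ⟨i, j⟩))),
    fun t => k (e.symm t).1 (e.symm t).2, ?_, ?_, ?_⟩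
  · refine ⟨n, F, fun i => fun b => G i (fun j => b (e ⟨i, j⟩)), hF, fun i => ?_, rfl⟩
    exact hJ N ⟨p i, G i, fun j => fun b => b (e ⟨i, j⟩), hG i,
      fun j => ⟨e ⟨i, j⟩, rfl⟩, rfl⟩
  · intro t; exact hk _ _
  · funext a
    simp only
    congr 1
    funext i
    rw [hgeq i]
    show G i (fun j => k i j a) = _
    congr 1
    funext j
    exact (congrFun (congrArg (fun s : Σ i, Fin (p i) => k s.1 s.2)
      (e.symm_apply_apply ⟨i, j⟩)) a).symm
end

section
/- Let $F \subseteq \mathcal{F}_{AB}$, and let $C_1$ and $C_2$ be clones on $A$ and $B$ respectively. Then the smallest $(C_1,C_2)$-stable class containing $F$ equals $C_2(FC_1)$. -/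
/-- F is (C₁,C₂)-stable: stable under right composition with C₁
and under left composition with C₂. -/
def Stable {A B : Type*} (C₁ : MClass A A) (C₂ : MClass B B) (F : MClass A B) : Prop :=
  SubClass (MComp F C₁) F ∧ SubClass (MComp C₂ F) F

lemma mcomp_mono {A B C : Type*} {I I' : MClass B C} {J J' : MClass A B}
    (hI : SubClass I I') (hJ : SubClass J J') : SubClass (MComp I J) (MComp I' J') := by
  rintro m h ⟨n, f, g, hf, hg, rfl⟩
  exact ⟨n, f, g, hI n hf, fun i => hJ m (hg i), rfl⟩

lemma easy_assoc {A B C D : Type*} (I : MClass C D) (J : MClass B C) (K : MClass A B) :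
    SubClass (MComp (MComp I J) K) (MComp I (MComp J K)) := by
  rintro m h ⟨n, f, g, ⟨p, f', g', hf', hg', rfl⟩, hg, rfl⟩
  exact ⟨p, f', fun i' => fun a => g' i' (fun i => g i a), hf',
    fun i' => ⟨n, g' i', g, hg' i', hg, rfl⟩, rfl⟩

lemma right_absorb {A B : Type*} {C : MClass A A} (hC : IsClone C) (G : MClass A B) :
    SubClass (MComp (MComp G C) C) (MComp G C) := by
  intro m h hh
  have := easy_assoc G C C m hh
  exact mcomp_mono (fun n => le_refl (G n)) hC.2 m this

lemma mem_comp_right {A B : Type*} {C : MClass A A} (hC : IsClone C) {G : MClass A B}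
    {n : ℕ} {f : (Fin n → A) → B} (hf : f ∈ G n) : f ∈ MComp G C n :=
  ⟨n, f, fun i => fun a => a i, hf, fun i => hC.1 n i, rfl⟩

lemma mem_comp_left {A B : Type*} {C : MClass B B} (hC : IsClone C) {G : MClass A B}
    {n : ℕ} {f : (Fin n → A) → B} (hf : f ∈ G n) : f ∈ MComp C G n :=
  ⟨1, fun b => b 0, fun _ => f, hC.1 1 0, fun _ => hf, rfl⟩

lemma left_absorb {A B : Type*} {C : MClass B B} (hC : IsClone C) (G : MClass A B) :
    SubClass (MComp C (MComp C G)) (MComp C G) := by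
  rintro m h ⟨n, f, w, hf, hw, rfl⟩
  choose p c k hc hk hw using hw
  let e : (Σ i : Fin n, Fin (p i)) ≃ Fin (Fintype.card (Σ i : Fin n, Fin (p i))) :=
    Fintype.equivFin _
  set N := Fintype.card (Σ i : Fin n, Fin (p i)) with hN
  refine ⟨N, fun b => f (fun i => c i (fun j => b (e ⟨i, j⟩))),
    fun l => k (e.symm l).1 (e.symm l).2, ?_, fun l => hk _ _, ?_⟩
  · apply hC.2
    refine ⟨n, f, fun i => fun b => c i (fun j => b (e ⟨i, j⟩)), hf, fun i => ?_, rfl⟩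
    apply hC.2
    exact ⟨p i, c i, fun j => fun b => b (e ⟨i, j⟩), hc i, fun j => hC.1 N (e ⟨i, j⟩), rfl⟩
  · funext a
    congr 1
    funext i
    rw [hw i]
    show c i (fun j => k i j a) = _
    congr 1
    funext j
    show _ = k (e.symm (e ⟨i, j⟩)).1 (e.symm (e ⟨i, j⟩)).2 a
    rw [Equiv.symm_apply_apply]

theorem generated_stable_class_eq {A B : Type*} (C₁ : MClass A A) (C₂ : MClass B B)
    (hC₁ : IsClone C₁) (hC₂ : IsClone C₂) (F : MClass A B) :
    (fun n => { f | ∀ G : MClass A B, Stable C₁ C₂ G → SubClass F G → f ∈ G n })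
      = MComp C₂ (MComp F C₁) := by
  have hFsub : SubClass F (MComp C₂ (MComp F C₁)) :=
    fun n f hf => mem_comp_left hC₂ (mem_comp_right hC₁ hf)
  have hstab : Stable C₁ C₂ (MComp C₂ (MComp F C₁)) := by
    constructor
    · intro m h hh
      have := easy_assoc C₂ (MComp F C₁) C₁ m hh
      exact mcomp_mono (fun n => le_refl (C₂ n)) (right_absorb hC₁ F) m this
    · exact left_absorb hC₂ (MComp F C₁)
  funext n
  ext f
  constructor
  · intro hf
    exact hf _ hstab hFsub
  · intro hf G hG hFG
    obtain ⟨p, c, w, hc, hw, rfl⟩ := hf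
    apply hG.2 n
    refine ⟨p, c, w, hc, fun i => ?_, rfl⟩
    obtain ⟨q, g, d, hg, hd, hweq⟩ := hw i
    rw [hweq]
    exact hG.1 n ⟨q, g, d, hFG q hg, hd, rfl⟩
end

section
/- Let $T, F \subseteq \{0,1\}^n$ satisfy: $\mathbf{u} \not\leq \overline{\mathbf{u}'}$ for all $\mathbf{u},\mathbf{u}' \in T$; $\overline{\mathbf{v}} \not\leq \mathbf{v}'$ for all $\mathbf{v},\mathbf{v}' \in F$; and $\mathbf{u} \not\leq \mathbf{v}$ for all $\mathbf{u} \in T$, $\mathbf{v} \in F$. Then there exists an upset $U$ of $\{0,1\}^n$ with $|U| = 2^{n-1}$ such that $T \subseteq U$, $F \subseteq \overline{U}$, and $U \cap \overline{U} = \emptyset$. -/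
/-!
Put `S = T ∪ {v̄ : v ∈ F}`. The three hypotheses say precisely that any two members of `S` meet,
i.e. `S` is an intersecting family of the Boolean algebra `{0,1}^n`. An intersecting family extends
to a maximal one; in a nontrivial finite Boolean algebra a maximal intersecting family contains
exactly one of `a`, `aᶜ` for every `a`, so it has half the size of the algebra, and it is an upper
set because enlarging a member keeps it meeting everything.
-/

namespace Set.Intersecting

variable {α : Type*} [BooleanAlgebra α]

theorem union_compl_image {T F : Set α} (hT : ∀ u ∈ T, ∀ u' ∈ T, ¬ u ≤ u'ᶜ)
    (hF : ∀ v ∈ F, ∀ v' ∈ F, ¬ vᶜ ≤ v') (hTF : ∀ u ∈ T, ∀ v ∈ F, ¬ u ≤ v) :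
    (T ∪ compl '' F).Intersecting := by
  rintro _ (hu | ⟨v, hv, rfl⟩) _ (hu' | ⟨v', hv', rfl⟩) hdisj
  · exact hT _ hu _ hu' hdisj.le_compl_right
  · exact hTF _ hu _ hv' (compl_compl v' ▸ hdisj.le_compl_right)
  · exact hTF _ hu' _ hv (compl_compl v ▸ hdisj.symm.le_compl_right)
  · exact hF _ hv _ hv' (compl_compl v' ▸ hdisj.le_compl_right)

theorem exists_isUpperSet_superset_two_mul_ncard_eq [Nontrivial α] [Fintype α] {s : Set α}
    (hs : s.Intersecting) :
    ∃ t : Set α, s ⊆ t ∧ t.Intersecting ∧ IsUpperSet t ∧ 2 * t.ncard = Fintype.card α := by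
  classical
  obtain ⟨t, hst, hcard, ht⟩ :=
    Intersecting.exists_card_eq (s := s.toFinset) (by rwa [Set.coe_toFinset])
  refine ⟨t, Set.toFinset_subset.mp hst, ht, ht.isUpperSet' (ht.is_max_iff_card_eq.mpr hcard), ?_⟩
  rwa [Set.ncard_coe_finset]

end Set.Intersecting

theorem extend_to_halving_upset (n : ℕ) (hn : 0 < n) (T F : Set (Fin n → Bool))
    (hT : ∀ u ∈ T, ∀ u' ∈ T, ¬ u ≤ (fun i => ! u' i))
    (hF : ∀ v ∈ F, ∀ v' ∈ F, ¬ (fun i => ! v i) ≤ v')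
    (hTF : ∀ u ∈ T, ∀ v ∈ F, ¬ u ≤ v) :
    ∃ U : Set (Fin n → Bool),
      (∀ a ∈ U, ∀ b, a ≤ b → b ∈ U) ∧
      U.ncard = 2 ^ (n - 1) ∧
      T ⊆ U ∧
      (∀ v ∈ F, (fun i => ! v i) ∈ U) ∧
      (∀ u ∈ U, (fun i => ! u i) ∉ U) := by
  have : NeZero n := ⟨hn.ne'⟩
  obtain ⟨U, hSU, hU, hUp, hcard⟩ :=
    (Set.Intersecting.union_compl_image hT hF hTF).exists_isUpperSet_superset_two_mul_ncard_eq
  refine ⟨U, fun a ha b hab => hUp hab ha, ?_, fun u hu => hSU (.inl hu),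
    fun v hv => hSU (.inr ⟨v, hv, rfl⟩), fun u hu => hU.compl_notMem hu⟩
  obtain ⟨m, rfl⟩ := Nat.exists_eq_add_one_of_ne_zero hn.ne'
  simp only [Fintype.card_fun, Fintype.card_bool, Fintype.card_fin, pow_succ] at hcard
  simp only [Nat.add_sub_cancel]
  omega
end

section
/- Let $T, F \subseteq \{0,1\}^n$ satisfy: $\mathbf{u} \not\leq \overline{\mathbf{u}'}$ for all $\mathbf{u},\mathbf{u}' \in T$; $\overline{\mathbf{v}} \not\leq \mathbf{v}'$ for all $\mathbf{v},\mathbf{v}' \in F$; and $\mathbf{u} \not\leq \mathbf{v}$ for all $\mathbf{u} \in T$, $\mathbf{v} \in F$. Then there exists a monotone self-dual function $f : \{0,1\}^n \to \{0,1\}$ with $f(\mathbf{a}) = 1$ for all $\mathbf{a} \in T$ and $f(\mathbf{b}) = 0$ for all $\mathbf{b} \in F$. -/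
theorem exists_selfdual_monotone_interpolant (n : ℕ) (hn : 0 < n)
    (T F : Set (Fin n → Bool))
    (hT : ∀ u ∈ T, ∀ u' ∈ T, ¬ u ≤ (fun i => ! u' i))
    (hF : ∀ v ∈ F, ∀ v' ∈ F, ¬ (fun i => ! v i) ≤ v')
    (hTF : ∀ u ∈ T, ∀ v ∈ F, ¬ u ≤ v) :
    ∃ f : (Fin n → Bool) → Bool,
      Monotone f ∧
      (∀ a, f (fun i => ! a i) = ! f a) ∧
      (∀ a ∈ T, f a = true) ∧
      (∀ b ∈ F, f b = false) := by
  classical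
  -- Bool helper facts
  have L1 : ∀ x y z : Bool, y ≤ x → z ≤ !x → z ≤ !y := by decide
  have L2 : ∀ x y : Bool, (!x) ≤ (!y) → y ≤ x := by decide
  have L3 : ∀ x y z : Bool, (!y) ≤ x → z ≤ (!x) → z ≤ y := by decide
  have L4 : ∀ x y : Bool, (!y) ≤ x → (!x) ≤ y := by decide
  set P : (Fin n → Bool) → Prop :=
    fun a => (∃ u ∈ T, u ≤ a) ∨ (∃ v ∈ F, (fun i => ! v i) ≤ a) with hPdef
  have Pmono : ∀ a b, a ≤ b → P a → P b := by
    intro a b hab h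
    rcases h with ⟨u, hu, hle⟩ | ⟨v, hv, hle⟩
    · exact Or.inl ⟨u, hu, le_trans hle hab⟩
    · exact Or.inr ⟨v, hv, le_trans hle hab⟩
  have key : ∀ a, P a → ¬ P (fun i => ! a i) := by
    intro a ha hna
    rcases ha with ⟨u, hu, hle⟩ | ⟨v, hv, hle⟩ <;>
      rcases hna with ⟨u', hu', hle'⟩ | ⟨v', hv', hle'⟩
    · exact hT u' hu' u hu (fun i => L1 (a i) (u i) (u' i) (hle i) (hle' i))
    · exact hTF u hu v' hv' (le_trans hle (fun i => L2 (v' i) (a i) (hle' i)))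
    · exact hTF u' hu' v hv (fun i => L3 (a i) (v i) (u' i) (hle i) (hle' i))
    · exact hF v' hv' v hv (fun i => le_trans (hle' i) (L4 (a i) (v i) (hle i)))
  let f₀ : (Fin n → Bool) → Bool := fun a => decide (P a)
  have f₀mono : ∀ a b, a ≤ b → f₀ a ≤ f₀ b := by
    intro a b hab
    by_cases h : P a
    · simp only [f₀, decide_eq_true h, decide_eq_true (Pmono a b hab h), le_refl]
    · simp [f₀, h]
  have f₀key : ∀ a, f₀ a = true → f₀ (fun i => ! a i) = false := by
    intro a ha
    simp only [f₀, decide_eq_true_eq] at ha ⊢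
    simp [key a ha]
  have dd : ∀ a : Fin n → Bool, (fun i => ! ! a i) = a := by
    intro a; funext i; simp
  let f : (Fin n → Bool) → Bool :=
    fun a => f₀ a || (!(f₀ (fun i => ! a i)) && a ⟨0, hn⟩)
  refine ⟨f, ?_, ?_, ?_, ?_⟩
  · intro a b hab
    by_cases hfa : f a = true
    · have hfb : f b = true := by
        simp only [f, Bool.or_eq_true, Bool.and_eq_true, Bool.not_eq_true'] at hfa ⊢
        rcases hfa with h | ⟨h1, h2⟩
        · exact Or.inl (Bool.le_iff_imp.mp (f₀mono a b hab) h)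
        · right
          constructor
          · have hle : (fun i => ! b i) ≤ (fun i => ! a i) :=
              fun i => L1 (b i) (a i) (!(b i)) (hab i) (le_refl _)
            have h := f₀mono _ _ hle
            rw [h1] at h
            revert h
            cases (f₀ fun i => ! b i) <;> simp
          · exact Bool.le_iff_imp.mp (hab ⟨0, hn⟩) h2
      simp [hfb, hfa]
    · simp only [Bool.not_eq_true] at hfa
      simp [hfa]
  · intro a
    simp only [f, dd]
    cases ha : f₀ a with
    | true =>
      have := f₀key a ha
      simp [this, ha]
    | false =>
      cases ha' : f₀ (fun i => ! a i) with
      | true => simp [ha, ha']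
      | false => simp [ha, ha']
  · intro a haT
    have : f₀ a = true := by
      simp only [f₀, decide_eq_true_eq]
      exact Or.inl ⟨a, haT, le_refl a⟩
    simp [f, this]
  · intro b hbF
    have h1 : f₀ b = false := by
      simp only [f₀, decide_eq_false_iff_not]
      rintro (⟨u, hu, hle⟩ | ⟨v, hv, hle⟩)
      · exact hTF u hu b hbF hle
      · exact hF v hv b hbF hle
    have h2 : f₀ (fun i => ! b i) = true := by
      simp only [f₀, decide_eq_true_eq]
      exact Or.inr ⟨b, hbF, le_refl _⟩
    simp [f, h1, h2]
end

section
/- If an upset $S$ of $\{0,1\}^n$ satisfies $S \cap \overline{S} = \emptyset$, then there exists an upset $U$ of cardinality $2^{n-1}$ with $S \subseteq U$ and $U \cap \overline{U} = \emptyset$. -/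
theorem upset_extends_to_halving_upset (n : ℕ) (hn : 0 < n)
    (S : Set (Fin n → Bool))
    (hup : ∀ a ∈ S, ∀ b, a ≤ b → b ∈ S)
    (hdisj : ∀ a ∈ S, (fun i => ! a i) ∉ S) :
    ∃ U : Set (Fin n → Bool),
      (∀ a ∈ U, ∀ b, a ≤ b → b ∈ U) ∧
      U.ncard = 2 ^ (n - 1) ∧
      S ⊆ U ∧
      (∀ a ∈ U, (fun i => ! a i) ∉ U) := by
  classical
  let comp : (Fin n → Bool) → (Fin n → Bool) := fun a i => ! a i
  have compinv : Function.Involutive comp := fun a => by funext i; simp [comp]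
  have companti : ∀ a b : Fin n → Bool, a ≤ b → comp b ≤ comp a := by
    intro a b h i
    have := h i
    revert this; simp only [comp]
    cases a i <;> cases b i <;> simp
  let P : Finset (Fin n → Bool) → Prop := fun U =>
    (∀ a ∈ U, ∀ b, a ≤ b → b ∈ U) ∧ S ⊆ ↑U ∧ (∀ a ∈ U, comp a ∉ U)
  have hSfin : S.Finite := Set.toFinite S
  have hPS : P hSfin.toFinset := by
    refine ⟨?_, ?_, ?_⟩
    · intro a ha b hab
      rw [Set.Finite.mem_toFinset] at *
      exact hup a ha b hab
    · intro a ha; simpa using ha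
    · intro a ha
      rw [Set.Finite.mem_toFinset] at *
      exact hdisj a ha
  -- pick a good finset of maximal cardinality
  have hne : (Finset.univ.filter P).Nonempty :=
    ⟨hSfin.toFinset, Finset.mem_filter.2 ⟨Finset.mem_univ _, hPS⟩⟩
  obtain ⟨U, hUmem, hmax⟩ := Finset.exists_max_image (Finset.univ.filter P)
    Finset.card hne
  have hPU : P U := by simpa using hUmem
  obtain ⟨hUup, hUS, hUd⟩ := hPU
  -- maximality forces totality: for each a, a ∈ U or comp a ∈ U
  have htot : ∀ a, a ∈ U ∨ comp a ∈ U := by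
    intro a
    by_contra hcon
    push_neg at hcon
    obtain ⟨ha, hca⟩ := hcon
    -- pick c ∈ {a, comp a} with c ≠ ⊥
    have key : ∀ c : Fin n → Bool, c ∉ U → comp c ∉ U → c ≠ (fun _ => false) → False := by
      intro c hc hcc hcbot
      -- extend U by the upset of c
      set U' : Finset (Fin n → Bool) := U ∪ Finset.univ.filter (fun b => c ≤ b) with hU'
      have hmemU' : ∀ b, b ∈ U' ↔ b ∈ U ∨ c ≤ b := by
        intro b; simp [hU']
      have hPU' : P U' := by
        refine ⟨?_, ?_, ?_⟩
        · intro x hx b hxb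
          rw [hmemU'] at *
          rcases hx with hx | hx
          · exact Or.inl (hUup x hx b hxb)
          · exact Or.inr (le_trans hx hxb)
        · intro x hx
          have : x ∈ U := hUS hx
          simp only [Finset.mem_coe]
          rw [hmemU']
          exact Or.inl this
        · intro b hb hcb
          rw [hmemU'] at hb hcb
          rcases hb with hb | hb <;> rcases hcb with hcb | hcb
          · exact hUd b hb hcb
          · -- c ≤ comp b, so b ≤ comp c, so comp c ∈ U
            have : b ≤ comp c := by
              have := companti c (comp b) hcb
              rwa [compinv] at this
            exact hcc (hUup b hb _ this)
          · -- c ≤ b so comp b ≤ comp c, so comp c ∈ U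
            have : comp b ≤ comp c := companti c b hb
            exact hcc (hUup (comp b) hcb _ this)
          · -- c ≤ b and c ≤ comp b forces c = ⊥
            apply hcbot
            funext i
            have h1 := hb i
            have h2 := hcb i
            revert h1 h2
            simp only [comp]
            cases c i <;> cases b i <;> simp
      have hcU' : c ∈ U' := by rw [hmemU']; exact Or.inr le_rfl
      have hsub : U ⊆ U' := Finset.subset_union_left
      have hlt : U.card < U'.card :=
        Finset.card_lt_card (Finset.ssubset_iff_of_subset hsub |>.2 ⟨c, hcU', hc⟩)
      have := hmax U' (Finset.mem_filter.2 ⟨Finset.mem_univ _, hPU'⟩)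
      omega
    by_cases hab : a = (fun _ => false)
    · apply key (comp a) hca (by rwa [compinv]) ?_
      intro h
      have := congrFun h ⟨0, hn⟩
      simp [comp, hab] at this
    · exact key a ha hca hab
  -- cardinality computation
  have hcard : U.card = 2 ^ (n - 1) := by
    have hinj : Function.Injective comp := compinv.injective
    have hdisjUV : Disjoint U (U.image comp) := by
      rw [Finset.disjoint_left]
      intro x hx hx'
      obtain ⟨y, hy, hyx⟩ := Finset.mem_image.1 hx'
      have : comp x ∈ U := by rw [← hyx, compinv]; exact hy
      exact hUd x hx this
    have huniv : U ∪ U.image comp = Finset.univ := by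
      apply Finset.eq_univ_of_forall
      intro a
      rcases htot a with h | h
      · exact Finset.mem_union_left _ h
      · refine Finset.mem_union_right _ (Finset.mem_image.2 ⟨comp a, h, ?_⟩)
        rw [compinv]
    have h1 : U.card + (U.image comp).card = 2 ^ n := by
      rw [← Finset.card_union_of_disjoint hdisjUV, huniv]
      simp [Fintype.card_fun]
    rw [Finset.card_image_of_injective _ hinj] at h1
    have h2 : 2 ^ n = 2 * 2 ^ (n - 1) := by
      rw [← pow_succ']
      congr 1
      omega
    omega
  refine ⟨↑U, ?_, ?_, hUS, ?_⟩
  · intro a ha b hab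
    exact hUup a ha b hab
  · rw [Set.ncard_coe_finset]; exact hcard
  · intro a ha
    exact hUd a ha
end

section
/- Let $f : \{0,1\}^n \to \{0,1\}$ satisfy $f(\mathbf{0}) = 0$, $f(\mathbf{1}) = 1$, and suppose $f$ is not monotone. Then $f$ has a ternary minor $f'$ satisfying $f'(0,0,0) = 0$, $f'(1,0,0) = 1$, $f'(1,1,0) = 0$, and $f'(1,1,1) = 1$. -/
/-!
A failure of monotonicity gives `a ≤ b` with `f a = 1` and `f b = 0`. Identifying the variables
in three blocks — those where `a` is `1`, those where only `b` is `1`, and the rest — yields a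
ternary minor whose values at `000, 100, 110, 111` are `f 0, f a, f b, f 1 = 0, 1, 0, 1`.
-/

lemma Bool.exists_le_true_false_of_not_monotone {α : Type*} [Preorder α] {f : α → Bool}
    (hf : ¬ Monotone f) : ∃ a b, a ≤ b ∧ f a = true ∧ f b = false := by
  simp only [Monotone, not_forall] at hf
  obtain ⟨a, b, hab, hfab⟩ := hf
  exact ⟨a, b, hab, by revert hfab; cases f a <;> cases f b <;> decide⟩

section ThreeBlocks

variable {ι : Type*}

lemma vecThree_const_comp {α : Type*} (x : α) (σ : ι → Fin 3) :
    (![x, x, x] : Fin 3 → α) ∘ σ = fun _ => x := by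
  ext i
  simp only [Function.comp]
  generalize σ i = j
  fin_cases j <;> rfl

def threeBlocks (a b : ι → Bool) (i : ι) : Fin 3 :=
  if a i then 0 else if b i then 1 else 2

lemma vecThree_comp_threeBlocks_left (a b : ι → Bool) :
    (![true, false, false] : Fin 3 → Bool) ∘ threeBlocks a b = a := by
  ext i
  simp only [Function.comp, threeBlocks]
  cases a i <;> cases b i <;> rfl

lemma vecThree_comp_threeBlocks_right {a b : ι → Bool} (hab : a ≤ b) :
    (![true, true, false] : Fin 3 → Bool) ∘ threeBlocks a b = b := by
  ext i
  have habi : a i ≤ b i := hab i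
  simp only [Function.comp, threeBlocks]
  revert habi
  cases a i <;> cases b i <;> decide

end ThreeBlocks

theorem nonmonotone_has_zigzag_minor (n : ℕ) (f : (Fin n → Bool) → Bool)
    (h0 : f (fun _ => false) = false) (h1 : f (fun _ => true) = true)
    (hm : ¬ Monotone f) :
    ∃ σ : Fin n → Fin 3,
      f ((![false, false, false] : Fin 3 → Bool) ∘ σ) = false ∧
      f ((![true, false, false] : Fin 3 → Bool) ∘ σ) = true ∧
      f ((![true, true, false] : Fin 3 → Bool) ∘ σ) = false ∧
      f ((![true, true, true] : Fin 3 → Bool) ∘ σ) = true := by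
  obtain ⟨a, b, hab, ha, hb⟩ := Bool.exists_le_true_false_of_not_monotone hm
  refine ⟨threeBlocks a b, ?_, ?_, ?_, ?_⟩
  · rwa [vecThree_const_comp]
  · rwa [vecThree_comp_threeBlocks_left]
  · rwa [vecThree_comp_threeBlocks_right hab]
  · rwa [vecThree_const_comp]
end

section
/- Let $f : \{0,1\}^n \to \{0,1\}$ with $f(\mathbf{0}) = f(\mathbf{1}) = 0$, and suppose $f$ is a minorant of a self-dual function (i.e., $f(\mathbf{a}) \wedge f(\overline{\mathbf{a}}) = 0$ for all $\mathbf{a}$) and $f$ is not constant. Then the binary nonimplication function $\nrightarrow$ (where $x \nrightarrow y = x \wedge \neg y$) is a minor of $f$. -/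
theorem nonimplication_is_minor (n : ℕ) (f : (Fin n → Bool) → Bool)
    (h0 : f (fun _ => false) = false) (h1 : f (fun _ => true) = false)
    (hmin : ∀ a, (f a && f (fun i => ! a i)) = false)
    (hnc : ∃ a b, f a ≠ f b) :
    ∃ σ : Fin n → Fin 2, ∀ a : Fin 2 → Bool, f (a ∘ σ) = (a 0 && ! a 1) := by
  obtain ⟨a, b, hab⟩ := hnc
  have htrue : ∃ c, f c = true := by
    cases ha : f a with
    | true => exact ⟨a, ha⟩
    | false =>
      cases hb : f b with
      | true => exact ⟨b, hb⟩
      | false => exact absurd (ha.trans hb.symm) hab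
  obtain ⟨c, hc⟩ := htrue
  refine ⟨fun i => if c i then 0 else 1, fun v => ?_⟩
  have hcomp : f (fun i => !c i) = false := by
    have := hmin c
    rw [hc] at this
    simpa using this
  cases h0v : v 0 <;> cases h1v : v 1 <;> simp only [Bool.and_true, Bool.and_false,
    Bool.not_true, Bool.not_false, Bool.true_and, Bool.false_and]
  · have : v ∘ (fun i => if c i then 0 else 1) = fun _ => false := by
      funext i; simp only [Function.comp]; split <;> assumption
    rw [this, h0]
  · have : v ∘ (fun i => if c i then 0 else 1) = fun i => !c i := by
      funext i; simp only [Function.comp]; split <;> simp_all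
    rw [this, hcomp]
  · have : v ∘ (fun i => if c i then 0 else 1) = c := by
      funext i; simp only [Function.comp]; split <;> simp_all
    rw [this, hc]
  · have : v ∘ (fun i => if c i then 0 else 1) = fun _ => true := by
      funext i; simp only [Function.comp]; split <;> assumption
    rw [this, h1]
end

section
/- Let $C$ be a clone of Boolean functions with $C \subseteq U$ (every function of $C$ is 1-separating of rank 2). If $f \in C$ is $n$-ary and $g_1,\dots,g_n$ are $m$-ary minorants of self-dual functions, then $f(g_1,\dots,g_n)$ is a minorant of a self-dual function. -/
theorem minorants_stable_left_separating (C : MClass Bool Bool) (hC : IsClone C)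
    (hU : ∀ k, ∀ f ∈ C k, ∀ a b : Fin k → Bool,
      f a = true → f b = true → ∃ i, a i = true ∧ b i = true)
    (n m : ℕ) (f : (Fin n → Bool) → Bool) (hf : f ∈ C n)
    (g : Fin n → (Fin m → Bool) → Bool)
    (hg : ∀ i, ∀ a : Fin m → Bool, (g i a && g i (fun j => ! a j)) = false) :
    ∀ a : Fin m → Bool,
      (f (fun i => g i a) && f (fun i => g i (fun j => ! a j))) = false := by
  intro a
  by_contra h
  rw [Bool.and_eq_false_iff] at h
  push_neg at h
  obtain ⟨h1, h2⟩ := h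
  simp only [Bool.not_eq_false] at h1 h2
  obtain ⟨i, hi1, hi2⟩ := hU n f hf _ _ h1 h2
  have := hg i a
  rw [hi1, hi2] at this
  simp at this
end

section
/- If a clone $C$ of Boolean functions is not contained in the clone $S$ of self-dual functions, then $C$ contains a binary function $f$ with $f(0,1) = f(1,0)$. -/
theorem nonselfdual_clone_has_witness (C : MClass Bool Bool) (hC : IsClone C)
    (hns : ¬ ∀ n, ∀ f ∈ C n, ∀ a : Fin n → Bool, f (fun i => ! a i) = ! f a) :
    ∃ f ∈ C 2, f ![false, true] = f ![true, false] := by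
  push_neg at hns
  obtain ⟨n, f, hf, a, ha⟩ := hns
  have hfa : f (fun i => ! a i) = f a := by
    revert ha; cases f (fun i => ! a i) <;> cases f a <;> simp
  refine ⟨fun b : Fin 2 → Bool => f (fun i => if a i then b 0 else b 1), ?_, ?_⟩
  · apply hC.2 2
    refine ⟨n, f, fun i b => if a i then b 0 else b 1, hf, fun i => ?_, rfl⟩
    by_cases h : a i <;> simp [h] <;> exact hC.1 2 _
  · show f (fun i => if a i then (![false, true] : Fin 2 → Bool) 0 else _) = _
    simp only [Matrix.cons_val_zero, Matrix.cons_val_one, Matrix.head_cons]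
    have : (fun i => if a i then false else true) = (fun i => ! a i) := by
      funext i; cases a i <;> simp
    rw [this, hfa]
    congr 1
    funext i; cases a i <;> simp
end

section
/- If a clone $C$ of Boolean functions is not contained in the clone $U$ of 1-separating functions of rank 2, then $C$ contains a ternary function $f$ with $f(0,0,1) = 1$ and $f(0,1,0) = 1$. -/
theorem nonseparating_clone_has_witness (C : MClass Bool Bool) (hC : IsClone C)
    (hns : ¬ ∀ n, ∀ f ∈ C n, ∀ a b : Fin n → Bool,
      f a = true → f b = true → ∃ i, a i = true ∧ b i = true) :
    ∃ f ∈ C 3, f ![false, false, true] = true ∧ f ![false, true, false] = true := by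

  push_neg at hns
  obtain ⟨n, f, hf, a, b, ha, hb, hsep⟩ := hns
  set j : Fin n → Fin 3 := fun i => if a i then 2 else if b i then 1 else 0 with hj
  refine ⟨fun x => f (fun i => x (j i)), ?_, ?_, ?_⟩
  · exact hC.2 3 ⟨n, f, fun i x => x (j i), hf, fun i => hC.1 3 (j i), rfl⟩
  · have : (fun i => (![false, false, true] : Fin 3 → Bool) (j i)) = a := by
      funext i
      have h := hsep i
      simp only [hj]
      cases ha' : a i <;> cases hb' : b i <;> simp_all
    show f (fun i => (![false, false, true] : Fin 3 → Bool) (j i)) = true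
    rw [this]; exact ha
  · have : (fun i => (![false, true, false] : Fin 3 → Bool) (j i)) = b := by
      funext i
      have h := hsep i
      simp only [hj]
      cases ha' : a i <;> cases hb' : b i <;> simp_all
    show f (fun i => (![false, true, false] : Fin 3 → Bool) (j i)) = true
    rw [this]; exact hb
end
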